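/- Let S be a set containing a distinguished element O, let Ω ⊆ S_nc respect direct sums of matrices with supp Ω nonempty, and suppose that for every n ∈ supp Ω, Ω_n is a complete metric space with respect to a metric ρ_n. Let f : Ω → Ω satisfy: (i) f(Ω_n) ⊆ Ω_n for every n ∈ supp Ω; (ii) f respects direct sums; (iii) for every n ∈ supp Ω there exists c_n with 0 ≤ c_n < 1 such that ρ_n(f(X), f(Y)) ≤ c_n ρ_n(X, Y) for all X, Y ∈ Ω_n. Let d = gcd{n : n ∈ supp Ω}. Then there exists X_* ∈ S^{d×d} such that for every n ∈ supp Ω the mapping f restricted to Ω_n has a unique fixed point, namely X_{*n} = ⊕_{α=1}^{n/d} X_*. -/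

import Mathlib

namespace NCPaper

variable {S : Type*}

/-- Direct sum of two square matrices over `S`, with off-diagonal entries `O`. -/
def dSum (O : S) {n m : ℕ} (X : Matrix (Fin n) (Fin n) S) (Y : Matrix (Fin m) (Fin m) S) :
    Matrix (Fin (n + m)) (Fin (n + m)) S := fun i j =>
  if hi : (i : ℕ) < n then
    if hj : (j : ℕ) < n then X ⟨i, hi⟩ ⟨j, hj⟩ else O
  else if hj : (j : ℕ) < n then O
  else Y ⟨(i : ℕ) - n, by have := i.isLt; omega⟩ ⟨(j : ℕ) - n, by have := j.isLt; omega⟩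

/-- Direct sum of `k` copies of a `d × d` matrix, as a `(k*d) × (k*d)` matrix. -/
def repSum (O : S) {d : ℕ} (k : ℕ) (X : Matrix (Fin d) (Fin d) S) :
    Matrix (Fin (k * d)) (Fin (k * d)) S := fun i j =>
  if (i : ℕ) / d = (j : ℕ) / d then
    X ⟨(i : ℕ) % d, Nat.mod_lt _ (Nat.pos_of_ne_zero fun h => absurd i.isLt (by simp [h]))⟩
      ⟨(j : ℕ) % d, Nat.mod_lt _ (Nat.pos_of_ne_zero fun h => absurd j.isLt (by simp [h]))⟩
  else O

/-- Cast a square matrix along an equality of sizes. -/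
def castMat {n m : ℕ} (h : n = m) (X : Matrix (Fin n) (Fin n) S) :
    Matrix (Fin m) (Fin m) S := fun i j => X (Fin.cast h.symm i) (Fin.cast h.symm j)

/-- The support of a subset of the nc space: sizes where it is nonempty. -/
def supp (Ω : ∀ n : ℕ, Set (Matrix (Fin n) (Fin n) S)) : Set ℕ :=
  {n | 0 < n ∧ (Ω n).Nonempty}

/-- A subset of the nc space respects direct sums of matrices. -/
def RespectsDSums (O : S) (Ω : ∀ n : ℕ, Set (Matrix (Fin n) (Fin n) S)) : Prop :=
  ∀ ⦃n m : ℕ⦄ (X : Matrix (Fin n) (Fin n) S) (Y : Matrix (Fin m) (Fin m) S),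
    X ∈ Ω n → Y ∈ Ω m → dSum O X Y ∈ Ω (n + m)

/-- `ρ` is a metric on the subset `s`. -/
def IsMetricOn {A : Type*} (ρ : A → A → ℝ) (s : Set A) : Prop :=
  (∀ x ∈ s, ∀ y ∈ s, (ρ x y = 0 ↔ x = y)) ∧
  (∀ x ∈ s, ∀ y ∈ s, ρ x y = ρ y x) ∧
  (∀ x ∈ s, ∀ y ∈ s, ∀ z ∈ s, ρ x z ≤ ρ x y + ρ y z)

/-- The subset `s` is complete with respect to `ρ`: every Cauchy sequence in `s`
converges to a point of `s`. -/
def IsCompleteOn {A : Type*} (ρ : A → A → ℝ) (s : Set A) : Prop :=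
  ∀ u : ℕ → A, (∀ j, u j ∈ s) →
    (∀ ε > (0 : ℝ), ∃ N : ℕ, ∀ j ≥ N, ∀ k ≥ N, ρ (u j) (u k) < ε) →
    ∃ L ∈ s, ∀ ε > (0 : ℝ), ∃ N : ℕ, ∀ j ≥ N, ρ (u j) L < ε

/-- The subset `s` is closed in the ambient set `t` with respect to `ρ`: any point of `t` that
is a `ρ`-limit of a sequence from `s` belongs to `s`. -/
def IsClosedIn {A : Type*} (ρ : A → A → ℝ) (s t : Set A) : Prop :=
  ∀ u : ℕ → A, (∀ j, u j ∈ s) → ∀ L ∈ t,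
    (∀ ε > (0 : ℝ), ∃ N : ℕ, ∀ j ≥ N, ρ (u j) L < ε) → L ∈ s

/-!
At each level the classical Banach fixed point theorem gives a unique fixed point `A n`, and
uniqueness together with the direct-sum compatibility of `f` forces `A (n + m) = A n ⊕ A m`.
Hence all `A n` are top-left corners of one `ℕ × ℕ` array `E`, which is invariant under the
diagonal shift by any `m ∈ supp Ω` and vanishes off the diagonal blocks cut at `m`. An additive
semigroup of positive integers with gcd `d` contains some `m` together with `m + d`, so `E` is
`d`-periodic along the diagonal, hence block diagonal with one repeated `d × d` block.
-/

theorem IsMetricOn.exists_unique_fixedPoint {A : Type*} {ρ : A → A → ℝ} {s : Set A}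
    (hm : IsMetricOn ρ s) (hcom : IsCompleteOn ρ s) (hs : s.Nonempty)
    {g : A → A} (hg : Set.MapsTo g s s) {c : ℝ} (hc0 : 0 ≤ c) (hc1 : c < 1)
    (hlip : ∀ x ∈ s, ∀ y ∈ s, ρ (g x) (g y) ≤ c * ρ x y) :
    ∃ X ∈ s, g X = X ∧ ∀ Y ∈ s, g Y = Y → Y = X := by
  obtain ⟨heq, hsymm, htri⟩ := hm
  let _ : MetricSpace s :=
    { dist := fun x y => ρ x y
      dist_self := fun x => (heq x x.2 x x.2).2 rfl
      dist_comm := fun x y => hsymm x x.2 y y.2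
      dist_triangle := fun x y z => htri x x.2 y y.2 z z.2
      eq_of_dist_eq_zero := fun {x y} h => Subtype.ext ((heq x x.2 y y.2).1 h) }
  have : Nonempty s := hs.to_subtype
  have : CompleteSpace s := by
    refine Metric.complete_of_cauchySeq_tendsto fun u hu => ?_
    obtain ⟨L, hLs, hL⟩ := hcom (fun j => u j) (fun j => (u j).2) (Metric.cauchySeq_iff.1 hu)
    exact ⟨⟨L, hLs⟩, Metric.tendsto_atTop.2 hL⟩
  have hG : ContractingWith c.toNNReal (hg.restrict g s s) := by
    refine ⟨Real.toNNReal_lt_one.2 hc1, LipschitzWith.of_dist_le_mul fun x y => ?_⟩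
    rw [Real.coe_toNNReal c hc0]
    exact hlip x x.2 y y.2
  refine ⟨hG.fixedPoint, (hG.fixedPoint).2, congrArg Subtype.val hG.fixedPoint_isFixedPt,
    fun Y hY hgY => congrArg Subtype.val (hG.fixedPoint_unique (x := ⟨Y, hY⟩) (Subtype.ext hgY))⟩

theorem exists_mem_add_mem_of_gcd {T : Set ℕ} (hT : T.Nonempty) (hpos : ∀ n ∈ T, 0 < n)
    (hadd : ∀ n ∈ T, ∀ m ∈ T, n + m ∈ T) {d : ℕ} (hdvd : ∀ n ∈ T, d ∣ n)
    (hgcd : ∀ e : ℕ, (∀ n ∈ T, e ∣ n) → e ∣ d) :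
    ∃ m ∈ T, m + d ∈ T := by
  have hd : d = Nat.setGcd T :=
    Nat.dvd_antisymm (Nat.dvd_setGcd_iff.2 hdvd) (hgcd _ fun _ => Nat.setGcd_dvd_of_mem)
  have hclosure : ∀ n ∈ AddSubmonoid.closure T, n = 0 ∨ n ∈ T := fun n hn =>
    AddSubmonoid.closure_induction (fun n hn => Or.inr hn) (Or.inl rfl)
      (fun n m _ _ hn hm => by
        rcases hn with rfl | hn <;> rcases hm with rfl | hm <;> simp_all) hn
  obtain ⟨n₀, hn₀⟩ := hT
  have hd0 : 0 < d := Nat.pos_of_dvd_of_pos (hdvd n₀ hn₀) (hpos n₀ hn₀)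
  obtain ⟨N, hN⟩ := Nat.exists_mem_closure_of_ge T
  have hmem : ∀ k, N < k → k * d ∈ T := fun k hk =>
    ((hclosure _ (hN _ (by nlinarith) (hd ▸ dvd_mul_left d k))).resolve_left
      (Nat.mul_pos (by omega) hd0).ne')
  exact ⟨(N + 1) * d, hmem _ (by omega), by convert hmem (N + 2) (by omega) using 1; ring⟩

def toInfMatrix (O : S) {n : ℕ} (X : Matrix (Fin n) (Fin n) S) (i j : ℕ) : S :=
  if h : i < n ∧ j < n then X ⟨i, h.1⟩ ⟨j, h.2⟩ else O

section toInfMatrix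

variable (O : S) {n m : ℕ} (X : Matrix (Fin n) (Fin n) S) (Y : Matrix (Fin m) (Fin m) S)

@[simp]
theorem toInfMatrix_fin (i j : Fin n) : toInfMatrix O X i j = X i j := by
  simp [toInfMatrix]

theorem toInfMatrix_dSum_of_lt {i j : ℕ} (hi : i < n) (hj : j < n) :
    toInfMatrix O (dSum O X Y) i j = toInfMatrix O X i j := by
  simp [toInfMatrix, dSum, hi, hj, show i < n + m by omega, show j < n + m by omega]

theorem toInfMatrix_dSum_add_add (i j : ℕ) :
    toInfMatrix O (dSum O X Y) (n + i) (n + j) = toInfMatrix O Y i j := by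
  simp [toInfMatrix, dSum]

theorem toInfMatrix_dSum_of_lt_of_le {i j : ℕ} (hi : i < n) (hj : n ≤ j) :
    toInfMatrix O (dSum O X Y) i j = O ∧ toInfMatrix O (dSum O X Y) j i = O := by
  simp [toInfMatrix, dSum, hi, Nat.not_lt.2 hj]

end toInfMatrix

theorem apply_mul_add_eq {E : ℕ → ℕ → S} {d : ℕ} (hper : ∀ i j, E (d + i) (d + j) = E i j)
    (t i j : ℕ) : E (t * d + i) (t * d + j) = E i j := by
  induction t generalizing i j with
  | zero => simp
  | succ t ih =>
    rw [show (t + 1) * d + i = t * d + (d + i) by ring,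
      show (t + 1) * d + j = t * d + (d + j) by ring, ih, hper]

theorem apply_eq_apply_mod_of_div_eq {E : ℕ → ℕ → S} {d : ℕ}
    (hper : ∀ i j, E (d + i) (d + j) = E i j) {i j : ℕ} (h : i / d = j / d) :
    E i j = E (i % d) (j % d) := by
  conv_lhs => rw [← Nat.div_add_mod' i d, ← Nat.div_add_mod' j d, ← h]
  exact apply_mul_add_eq hper _ _ _

theorem apply_eq_of_div_lt (O : S) {E : ℕ → ℕ → S} {d q : ℕ}
    (hper : ∀ i j, E (d + i) (d + j) = E i j) (hq : 0 < q)
    (hcut : ∀ i j, i < q * d → q * d ≤ j → E i j = O) {i j : ℕ} (h : i / d < j / d) :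
    E i j = O := by
  have hd : 0 < d := Nat.pos_of_ne_zero fun hd => by simp [hd] at h
  have hdj : i / d * d + d ≤ j := by
    have := Nat.mul_le_mul_right d (Nat.add_one_le_of_lt h)
    rw [add_one_mul] at this
    exact this.trans (Nat.div_mul_le_self j d)
  obtain ⟨q, rfl⟩ := Nat.exists_eq_add_one_of_ne_zero hq.ne'
  rw [add_one_mul] at hcut
  rw [← Nat.div_add_mod' i d, show j = i / d * d + (j - i / d * d) by omega,
    apply_mul_add_eq hper, ← apply_mul_add_eq hper q]
  have := Nat.mod_lt i hd
  exact hcut _ _ (by omega) (by omega)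

section family

variable {A : ∀ n : ℕ, Matrix (Fin n) (Fin n) S} {T : Set ℕ}

theorem exists_mem_gt (hpos : ∀ n ∈ T, 0 < n) (hadd : ∀ n ∈ T, ∀ m ∈ T, n + m ∈ T)
    {m : ℕ} (hm : m ∈ T) (k : ℕ) : ∃ N ∈ T, k < N := by
  induction k with
  | zero => exact ⟨m, hm, hpos m hm⟩
  | succ k ih =>
    obtain ⟨N, hN, hkN⟩ := ih
    exact ⟨N + m, hadd N hN m hm, by have := hpos m hm; omega⟩

theorem toInfMatrix_eq_of_lt (O : S) (hA : ∀ n ∈ T, ∀ m ∈ T, A (n + m) = dSum O (A n) (A m))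
    {n m : ℕ} (hn : n ∈ T) (hm : m ∈ T) {i j : ℕ} (hin : i < n) (hjn : j < n) (him : i < m)
    (hjm : j < m) : toInfMatrix O (A n) i j = toInfMatrix O (A m) i j :=
  calc toInfMatrix O (A n) i j = toInfMatrix O (A (n + m)) i j := by
        rw [hA n hn m hm, toInfMatrix_dSum_of_lt O _ _ hin hjn]
    _ = toInfMatrix O (A (m + n)) i j := by rw [add_comm]
    _ = toInfMatrix O (A m) i j := by rw [hA m hm n hn, toInfMatrix_dSum_of_lt O _ _ him hjm]

variable (O : S) {E : ℕ → ℕ → S}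

theorem extension_add_add (hadd : ∀ n ∈ T, ∀ m ∈ T, n + m ∈ T)
    (hA : ∀ n ∈ T, ∀ m ∈ T, A (n + m) = dSum O (A n) (A m)) (hunbdd : ∀ k, ∃ N ∈ T, k < N)
    (hE : ∀ n ∈ T, ∀ i j, i < n → j < n → toInfMatrix O (A n) i j = E i j)
    {m : ℕ} (hm : m ∈ T) (i j : ℕ) : E (m + i) (m + j) = E i j := by
  obtain ⟨N, hN, hiN⟩ := hunbdd (max i j)
  rw [← hE _ (hadd m hm N hN) _ _ (by omega) (by omega), hA m hm N hN,
    toInfMatrix_dSum_add_add, hE N hN _ _ (by omega) (by omega)]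

theorem extension_eq_of_lt_of_le (hadd : ∀ n ∈ T, ∀ m ∈ T, n + m ∈ T)
    (hA : ∀ n ∈ T, ∀ m ∈ T, A (n + m) = dSum O (A n) (A m)) (hunbdd : ∀ k, ∃ N ∈ T, k < N)
    (hE : ∀ n ∈ T, ∀ i j, i < n → j < n → toInfMatrix O (A n) i j = E i j)
    {m : ℕ} (hm : m ∈ T) ⦃i j : ℕ⦄ (hi : i < m) (hj : m ≤ j) : E i j = O ∧ E j i = O := by
  obtain ⟨N, hN, hjN⟩ := hunbdd j
  have hmN := hadd m hm N hN
  rw [← hE _ hmN i j (by omega) (by omega), ← hE _ hmN j i (by omega) (by omega), hA m hm N hN]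
  exact toInfMatrix_dSum_of_lt_of_le O _ _ hi hj

theorem exists_eq_castMat_repSum (hpos : ∀ n ∈ T, 0 < n) (hadd : ∀ n ∈ T, ∀ m ∈ T, n + m ∈ T)
    (hA : ∀ n ∈ T, ∀ m ∈ T, A (n + m) = dSum O (A n) (A m)) {d : ℕ} (hdvd : ∀ n ∈ T, d ∣ n)
    {m : ℕ} (hm : m ∈ T) (hmd : m + d ∈ T) :
    ∃ Xs : Matrix (Fin d) (Fin d) S, ∀ n (hn : n ∈ T),
      A n = castMat (Nat.div_mul_cancel (hdvd n hn)) (repSum O (n / d) Xs) := by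
  have hunbdd := exists_mem_gt hpos hadd hm
  obtain ⟨E, hE⟩ : ∃ E : ℕ → ℕ → S,
      ∀ n ∈ T, ∀ i j, i < n → j < n → toInfMatrix O (A n) i j = E i j := by
    choose N hNT hN using hunbdd
    exact ⟨fun i j => toInfMatrix O (A (N (max i j))) i j, fun n hn i j hi hj =>
      toInfMatrix_eq_of_lt O hA hn (hNT _) hi hj (by grind) (by grind)⟩
  have hper (i j : ℕ) : E (d + i) (d + j) = E i j := by
    rw [← extension_add_add O hadd hA hunbdd hE hm, ← add_assoc, ← add_assoc,
      extension_add_add O hadd hA hunbdd hE hmd]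
  have hcut := extension_eq_of_lt_of_le O hadd hA hunbdd hE hm
  obtain ⟨q, rfl⟩ := hdvd m hm
  have hq : 0 < q := Nat.pos_of_mul_pos_left (hpos _ hm)
  refine ⟨fun a b => E a b, fun n hn => Matrix.ext fun i j => ?_⟩
  rw [← toInfMatrix_fin O (A n), hE n hn i j i.2 j.2]
  simp only [castMat, repSum, Fin.val_cast]
  split_ifs with h
  · exact apply_eq_apply_mod_of_div_eq hper h
  · rw [mul_comm] at hcut
    rcases Nat.lt_or_gt_of_ne h with h | h
    · exact apply_eq_of_div_lt O hper hq (fun i j hi hj => (hcut hi hj).1) h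
    · exact apply_eq_of_div_lt O (E := fun i j => E j i) (fun i j => hper j i) hq
        (fun i j hi hj => (hcut hi hj).2) h

end family

theorem RespectsDSums.add_mem_supp {O : S} {Ω : ∀ n : ℕ, Set (Matrix (Fin n) (Fin n) S)}
    (h : RespectsDSums O Ω) {n m : ℕ} (hn : n ∈ supp Ω) (hm : m ∈ supp Ω) : n + m ∈ supp Ω :=
  have ⟨X, hX⟩ := hn.2
  have ⟨Y, hY⟩ := hm.2
  ⟨Nat.add_pos_left hn.1 m, dSum O X Y, h X Y hX hY⟩

theorem nc_contractive_mapping_theorem_part1_general {S : Type*} (O : S)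
    (Ω : ∀ n : ℕ, Set (Matrix (Fin n) (Fin n) S))
    (hdir : RespectsDSums O Ω) (hne : (supp Ω).Nonempty)
    (ρ : ∀ n : ℕ, Matrix (Fin n) (Fin n) S → Matrix (Fin n) (Fin n) S → ℝ)
    (hmetric : ∀ n ∈ supp Ω, IsMetricOn (ρ n) (Ω n))
    (hcomplete : ∀ n ∈ supp Ω, IsCompleteOn (ρ n) (Ω n))
    (f : ∀ n : ℕ, Matrix (Fin n) (Fin n) S → Matrix (Fin n) (Fin n) S)
    (hmaps : ∀ n ∈ supp Ω, ∀ X ∈ Ω n, f n X ∈ Ω n)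
    (hsums : ∀ ⦃n m : ℕ⦄ (X : Matrix (Fin n) (Fin n) S) (Y : Matrix (Fin m) (Fin m) S),
      X ∈ Ω n → Y ∈ Ω m → f (n + m) (dSum O X Y) = dSum O (f n X) (f m Y))
    (hcontr : ∀ n ∈ supp Ω, ∃ c : ℝ, 0 ≤ c ∧ c < 1 ∧
      ∀ X ∈ Ω n, ∀ Y ∈ Ω n, ρ n (f n X) (f n Y) ≤ c * ρ n X Y)
    (d : ℕ) (hdvd : ∀ n ∈ supp Ω, d ∣ n)
    (hgcd : ∀ e : ℕ, (∀ n ∈ supp Ω, e ∣ n) → e ∣ d) :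
    ∃ Xs : Matrix (Fin d) (Fin d) S, ∀ n, ∀ hn : n ∈ supp Ω,
      castMat (Nat.div_mul_cancel (hdvd n hn)) (repSum O (n / d) Xs) ∈ Ω n ∧
      f n (castMat (Nat.div_mul_cancel (hdvd n hn)) (repSum O (n / d) Xs)) =
        castMat (Nat.div_mul_cancel (hdvd n hn)) (repSum O (n / d) Xs) ∧
      ∀ Y ∈ Ω n, f n Y = Y →
        Y = castMat (Nat.div_mul_cancel (hdvd n hn)) (repSum O (n / d) Xs) := by
  have hfix (n : ℕ) (hn : n ∈ supp Ω) :
      ∃ X ∈ Ω n, f n X = X ∧ ∀ Y ∈ Ω n, f n Y = Y → Y = X := by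
    obtain ⟨c, hc0, hc1, hlip⟩ := hcontr n hn
    exact (hmetric n hn).exists_unique_fixedPoint (hcomplete n hn) hn.2 (hmaps n hn) hc0 hc1 hlip
  have : Inhabited S := ⟨O⟩
  choose! A hAΩ hAfix hAuniq using hfix
  have hpos (n : ℕ) (hn : n ∈ supp Ω) : 0 < n := hn.1
  have hadd (n : ℕ) (hn : n ∈ supp Ω) (m : ℕ) (hm : m ∈ supp Ω) : n + m ∈ supp Ω :=
    hdir.add_mem_supp hn hm
  have hA (n : ℕ) (hn : n ∈ supp Ω) (m : ℕ) (hm : m ∈ supp Ω) :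
      A (n + m) = dSum O (A n) (A m) := by
    refine (hAuniq _ (hadd n hn m hm) _ (hdir _ _ (hAΩ n hn) (hAΩ m hm)) ?_).symm
    rw [hsums _ _ (hAΩ n hn) (hAΩ m hm), hAfix n hn, hAfix m hm]
  obtain ⟨m, hm, hmd⟩ := exists_mem_add_mem_of_gcd hne hpos hadd hdvd hgcd
  obtain ⟨Xs, hXs⟩ := exists_eq_castMat_repSum O hpos hadd hA hdvd hm hmd
  exact ⟨Xs, fun n hn => hXs n hn ▸ ⟨hAΩ n hn, hAfix n hn, hAuniq n hn⟩⟩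

/-- **Theorem B, part 1 (nc Banach fixed point theorem).** If each level `Ω n` of a
direct-sum-closed subset of the nc space is a complete metric space, and a size- and
direct-sum-respecting self-mapping `f` is a strict contraction on each level, then there is a
single `d × d` matrix `Xs` (`d = gcd (supp Ω)`) such that `⊕_{α=1}^{n/d} Xs` is the
unique fixed point of `f` at every level `n` of the support. -/
theorem nc_contractive_mapping_theorem_part1 {S : Type*} (O : S)
    (Ω : ∀ n : ℕ, Set (Matrix (Fin n) (Fin n) S)) (hΩ0 : Ω 0 = ∅)
    (hdir : RespectsDSums O Ω) (hne : (supp Ω).Nonempty)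
    (ρ : ∀ n : ℕ, Matrix (Fin n) (Fin n) S → Matrix (Fin n) (Fin n) S → ℝ)
    (hmetric : ∀ n ∈ supp Ω, IsMetricOn (ρ n) (Ω n))
    (hcomplete : ∀ n ∈ supp Ω, IsCompleteOn (ρ n) (Ω n))
    (f : ∀ n : ℕ, Matrix (Fin n) (Fin n) S → Matrix (Fin n) (Fin n) S)
    (hmaps : ∀ n ∈ supp Ω, ∀ X ∈ Ω n, f n X ∈ Ω n)
    (hsums : ∀ ⦃n m : ℕ⦄ (X : Matrix (Fin n) (Fin n) S) (Y : Matrix (Fin m) (Fin m) S),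
      X ∈ Ω n → Y ∈ Ω m → f (n + m) (dSum O X Y) = dSum O (f n X) (f m Y))
    (hcontr : ∀ n ∈ supp Ω, ∃ c : ℝ, 0 ≤ c ∧ c < 1 ∧
      ∀ X ∈ Ω n, ∀ Y ∈ Ω n, ρ n (f n X) (f n Y) ≤ c * ρ n X Y)
    (d : ℕ) (hdvd : ∀ n ∈ supp Ω, d ∣ n)
    (hgcd : ∀ e : ℕ, (∀ n ∈ supp Ω, e ∣ n) → e ∣ d) :
    ∃ Xs : Matrix (Fin d) (Fin d) S, ∀ n, ∀ hn : n ∈ supp Ω,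
      castMat (Nat.div_mul_cancel (hdvd n hn)) (repSum O (n / d) Xs) ∈ Ω n ∧
      f n (castMat (Nat.div_mul_cancel (hdvd n hn)) (repSum O (n / d) Xs)) =
        castMat (Nat.div_mul_cancel (hdvd n hn)) (repSum O (n / d) Xs) ∧
      ∀ Y ∈ Ω n, f n Y = Y →
        Y = castMat (Nat.div_mul_cancel (hdvd n hn)) (repSum O (n / d) Xs) :=
  nc_contractive_mapping_theorem_part1_general O Ω hdir hne ρ hmetric hcomplete f hmaps hsums hcontr
    d hdvd hgcd

end NCPaper
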